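/- Let Y be a standard normal random variable and let G : ℝ → ℝ be a monotone (nondecreasing or nonincreasing), right-continuous, non-constant function such that E|G(Y)|^{1+θ} < ∞ for some θ ∈ (0,1]. Then E[Y G(Y)] is well-defined (E|Y G(Y)| < ∞) and E[Y G(Y)] ≠ 0; equivalently ∫_ℝ x G(x) φ(x) dx ≠ 0. In particular, the Hermite rank of G equals 1. -/

import Mathlib

open MeasureTheory ProbabilityTheory Set

noncomputable section

/-- the standard normal density -/
def stdGaussDensity (x : ℝ) : ℝ := (Real.sqrt (2 * Real.pi))⁻¹ * Real.exp (-x ^ 2 / 2)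

open scoped NNReal ENNReal

/-! Integrability of `Y G(Y)` is Hölder's inequality, `Y` having Gaussian moments of every order.
Since `E Y = 0`, `E[Y G(Y)] = E[Y (G(Y) - G(0))]`; for nondecreasing `G` this integrand is
nonnegative, and it is positive on a half-line on which `G` differs from `G 0`. Such a half-line
has positive Gaussian mass, so `E[Y G(Y)] > 0`; the nonincreasing case follows from `-G`. -/

lemma integral_mul_stdGaussDensity (f : ℝ → ℝ) :
    ∫ x, f x * stdGaussDensity x = ∫ x, f x ∂gaussianReal 0 1 := by
  rw [integral_gaussianReal_eq_integral_smul one_ne_zero]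
  congr 1 with x
  simp [gaussianPDFReal, stdGaussDensity, neg_div, mul_comm]

lemma integrable_id_mul_of_memLp_gaussianReal {μ : ℝ} {v : ℝ≥0} {G : ℝ → ℝ}
    {q : ℝ≥0∞} (hq : 1 < q) (hG : MemLp G q (gaussianReal μ v)) :
    Integrable (fun x => x * G x) (gaussianReal μ v) := by
  have hp : q.conjExponent ≠ ∞ := by
    simp [ENNReal.conjExponent, tsub_eq_zero_iff_le, hq]
  have := ENNReal.HolderConjugate.conjExponent hq.le
  exact (memLp_id_gaussianReal' _ hp).integrable_mul hG

lemma Monotone.mul_sub_nonneg {G : ℝ → ℝ} (hG : Monotone G) (x : ℝ) :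
    0 ≤ x * (G x - G 0) := by
  simpa [mul_comm] using (monovary_id_iff.2 hG).sub_mul_sub_nonneg 0 x

lemma Monotone.Ici_or_Iic_subset_support_mul_sub {G : ℝ → ℝ} (hG : Monotone G) {a : ℝ}
    (ha : G a ≠ G 0) :
    Ici a ⊆ Function.support (fun x => x * (G x - G 0)) ∨
      Iic a ⊆ Function.support (fun x => x * (G x - G 0)) := by
  rcases ha.lt_or_gt with h | h
  · have ha0 : a < 0 := hG.reflect_lt h
    exact .inr fun x (hx : x ≤ a) =>
      mul_ne_zero (hx.trans_lt ha0).ne (sub_neg.2 ((hG hx).trans_lt h)).ne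
  · have ha0 : 0 < a := hG.reflect_lt h
    exact .inl fun x (hx : a ≤ x) =>
      mul_ne_zero (ha0.trans_le hx).ne' (sub_pos.2 (h.trans_le (hG hx))).ne'

theorem integral_id_mul_pos_of_monotone {μ : Measure ℝ} (hμ : volume ≪ μ)
    (hid : Integrable id μ) (hmean : ∫ x, x ∂μ = 0) {G : ℝ → ℝ} (hG : Monotone G)
    (hGnc : ∃ x y, G x ≠ G y) (hint : Integrable (fun x => x * G x) μ) :
    0 < ∫ x, x * G x ∂μ := by
  obtain ⟨a, ha⟩ : ∃ a, G a ≠ G 0 := by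
    obtain ⟨x, y, hxy⟩ := hGnc
    by_contra! h
    exact hxy ((h x).trans (h y).symm)
  have hsplit : (fun x => x * (G x - G 0)) = fun x => x * G x - G 0 * id x := by
    ext x; simp only [id, mul_sub, mul_comm x (G 0)]
  have hint' : Integrable (fun x => x * (G x - G 0)) μ :=
    hsplit ▸ hint.sub (hid.const_mul (G 0))
  have hcentre : ∫ x, x * G x ∂μ = ∫ x, x * (G x - G 0) ∂μ := by
    rw [hsplit, integral_sub hint (hid.const_mul (G 0)), integral_const_mul]
    simp [hmean]
  have hray : ∀ s : Set ℝ, volume s = ∞ → μ s ≠ 0 := fun s hs h0 => by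
    simpa [hs] using hμ h0
  rw [hcentre, integral_pos_iff_support_of_nonneg hG.mul_sub_nonneg hint', pos_iff_ne_zero]
  rcases hG.Ici_or_Iic_subset_support_mul_sub ha with h | h
  · exact fun h0 => hray _ Real.volume_Ici (measure_mono_null h h0)
  · exact fun h0 => hray _ Real.volume_Iic (measure_mono_null h h0)

theorem integral_id_mul_ne_zero_of_monotone_or_antitone {μ : Measure ℝ} (hμ : volume ≪ μ)
    (hid : Integrable id μ) (hmean : ∫ x, x ∂μ = 0) {G : ℝ → ℝ}
    (hG : Monotone G ∨ Antitone G) (hGnc : ∃ x y, G x ≠ G y)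
    (hint : Integrable (fun x => x * G x) μ) :
    ∫ x, x * G x ∂μ ≠ 0 := by
  rcases hG with hG | hG
  · exact (integral_id_mul_pos_of_monotone hμ hid hmean hG hGnc hint).ne'
  · obtain ⟨x, y, hxy⟩ := hGnc
    have := integral_id_mul_pos_of_monotone hμ hid hmean hG.neg ⟨x, y, neg_injective.ne hxy⟩
      (by simpa only [mul_neg] using hint.fun_neg)
    simp only [mul_neg, integral_neg, neg_pos] at this
    exact this.ne

theorem hermite_rank_one_monotone_general {Ω : Type*} [MeasurableSpace Ω]
    (P : Measure Ω)
    (Y : Ω → ℝ)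
    (hY : Measure.map Y P = gaussianReal 0 1)
    (G : ℝ → ℝ) (hGmono : Monotone G ∨ Antitone G)
    (hGnc : ∃ x y, G x ≠ G y)
    (θ : ℝ) (hθ : θ ∈ Set.Ioc (0 : ℝ) 1)
    (hmom : Integrable (fun ω => |G (Y ω)| ^ (1 + θ)) P) :
    Integrable (fun ω => Y ω * G (Y ω)) P ∧
    (∫ ω, Y ω * G (Y ω) ∂P) ≠ 0 ∧
    (∫ x, x * G x * stdGaussDensity x) ≠ 0 := by
  have hYm : AEMeasurable Y P := .of_map_ne_zero (hY ▸ IsProbabilityMeasure.ne_zero _)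
  have hGm : Measurable G := hGmono.elim Monotone.measurable Antitone.measurable
  have hxGm : AEStronglyMeasurable (fun x => x * G x) (gaussianReal 0 1) :=
    (measurable_id.mul hGm).aestronglyMeasurable
  have hq : 0 < 1 + θ := by linarith [hθ.1]
  have hGLp : MemLp G (ENNReal.ofReal (1 + θ)) (gaussianReal 0 1) := by
    rw [← integrable_norm_rpow_iff hGm.aestronglyMeasurable (ENNReal.ofReal_pos.2 hq).ne'
      ENNReal.ofReal_ne_top, ENNReal.toReal_ofReal hq.le, ← hY,
      integrable_map_measure (hGm.norm.pow_const _).aestronglyMeasurable hYm]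
    exact hmom
  have hint := integrable_id_mul_of_memLp_gaussianReal (by simpa using hθ.1) hGLp
  have hne := integral_id_mul_ne_zero_of_monotone_or_antitone
    (gaussianReal_absolutelyContinuous' 0 one_ne_zero)
    (memLp_one_iff_integrable.1 (memLp_id_gaussianReal 1)) integral_id_gaussianReal hGmono hGnc hint
  refine ⟨(integrable_map_measure (g := fun x => x * G x) (hY ▸ hxGm) hYm).1 (hY ▸ hint),
    ?_, ?_⟩
  · rwa [← integral_map (f := fun x => x * G x) hYm (hY ▸ hxGm), hY]
  · rwa [integral_mul_stdGaussDensity]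

/-- a monotone, right-continuous, non-constant `G` with
`E|G(Y)|^{1+θ} < ∞` satisfies `E[Y G(Y)] ≠ 0`, i.e. has Hermite rank 1. -/
theorem hermite_rank_one_monotone {Ω : Type*} [MeasurableSpace Ω]
    (P : Measure Ω) [IsProbabilityMeasure P]
    (Y : Ω → ℝ) (hYmeas : Measurable Y)
    (hY : Measure.map Y P = gaussianReal 0 1)
    (G : ℝ → ℝ) (hGmono : Monotone G ∨ Antitone G)
    (hGrc : ∀ x, ContinuousWithinAt G (Set.Ici x) x)
    (hGnc : ∃ x y, G x ≠ G y)
    (θ : ℝ) (hθ : θ ∈ Set.Ioc (0 : ℝ) 1)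
    (hmom : Integrable (fun ω => |G (Y ω)| ^ (1 + θ)) P) :
    Integrable (fun ω => Y ω * G (Y ω)) P ∧
    (∫ ω, Y ω * G (Y ω) ∂P) ≠ 0 ∧
    (∫ x, x * G x * stdGaussDensity x) ≠ 0 :=
  hermite_rank_one_monotone_general P Y hY G hGmono hGnc θ hθ hmom
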